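/- arXiv:math/0308231 — 3 statements merged into one kernel-verified Lean document; each statement's English description precedes it below -/
import Mathlib

section
/- Let θ : B(G) → B(G) be a unital *-homomorphism and Ω ∈ G a unit vector. Set p = θ(ΩΩ*), where ΩΩ* denotes the rank-one projection g ↦ ⟨Ω,g⟩Ω. Then p is an orthogonal projection, and for all g, g' ∈ G and g_1, g_1' ∈ pG one has ⟨θ(gΩ*)g_1, θ(g'Ω*)g_1'⟩ = ⟨g, g'⟩⟨g_1, g_1'⟩; consequently the map g ⊗ g_1 ↦ θ(gΩ*)g_1 extends to an isometry from G ⊗ pG into G. -/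
open scoped InnerProductSpace

/-- The rank-one operator `g h* : k ↦ ⟪h, k⟫ • g` on a Hilbert space. -/
noncomputable def rankOne {G : Type*} [NormedAddCommGroup G] [InnerProductSpace ℂ G]
    (g h : G) : G →L[ℂ] G :=
  (innerSL ℂ h).smulRight g

lemma rankOne_apply {G : Type*} [NormedAddCommGroup G] [InnerProductSpace ℂ G]
    (g h k : G) : rankOne g h k = ⟪h, k⟫_ℂ • g := rfl

lemma rankOne_star {G : Type*} [NormedAddCommGroup G] [InnerProductSpace ℂ G]
    [CompleteSpace G] (g h : G) : star (rankOne g h) = rankOne h g := by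
  rw [ContinuousLinearMap.star_eq_adjoint]
  refine ContinuousLinearMap.ext fun x => ?_
  refine ext_inner_left ℂ fun y => ?_
  rw [ContinuousLinearMap.adjoint_inner_right, rankOne_apply, rankOne_apply,
    inner_smul_left, inner_smul_right]
  rw [← inner_conj_symm h y, Complex.conj_conj]
  ring

lemma rankOne_comp {G : Type*} [NormedAddCommGroup G] [InnerProductSpace ℂ G]
    (a b c d : G) : rankOne a b * rankOne c d = ⟪b, c⟫_ℂ • rankOne a d := by
  refine ContinuousLinearMap.ext fun x => ?_
  simp [rankOne_apply, ContinuousLinearMap.mul_apply, inner_smul_right, smul_smul, mul_comm]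

/-- Let `θ : B(G) → B(G)` be a unital *-homomorphism and `Ω ∈ G` a unit
vector.  Set `p = θ(ΩΩ*)`.  Then `p` is an orthogonal projection (self-adjoint
idempotent), and for all `g, g' ∈ G` and `g₁, g₁' ∈ pG` one has
`⟪θ(gΩ*)g₁, θ(g'Ω*)g₁'⟫ = ⟪g, g'⟫⟪g₁, g₁'⟫`; consequently `g ⊗ g₁ ↦ θ(gΩ*)g₁`
extends to an isometry from `G ⊗ pG` into `G`. -/
theorem statement2
    {G : Type*} [NormedAddCommGroup G] [InnerProductSpace ℂ G] [CompleteSpace G]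
    (θ : (G →L[ℂ] G) →⋆ₐ[ℂ] (G →L[ℂ] G))
    (Ω : G) (hΩ : ‖Ω‖ = 1) :
    IsSelfAdjoint (θ (rankOne Ω Ω)) ∧ IsIdempotentElem (θ (rankOne Ω Ω)) ∧
    ∀ (g g' g₁ g₁' : G),
      θ (rankOne Ω Ω) g₁ = g₁ → θ (rankOne Ω Ω) g₁' = g₁' →
      ⟪θ (rankOne g Ω) g₁, θ (rankOne g' Ω) g₁'⟫_ℂ = ⟪g, g'⟫_ℂ * ⟪g₁, g₁'⟫_ℂ := by
  have hΩΩ : ⟪Ω, Ω⟫_ℂ = 1 := by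
    rw [inner_self_eq_norm_sq_to_K, hΩ]; norm_num
  refine ⟨?_, ?_, ?_⟩
  · rw [IsSelfAdjoint, ← map_star, rankOne_star]
  · rw [IsIdempotentElem, ← map_mul, rankOne_comp, hΩΩ, one_smul]
  · intro g g' g₁ g₁' h₁ h₁'
    have key : (star (rankOne g Ω)) * rankOne g' Ω = ⟪g, g'⟫_ℂ • rankOne Ω Ω := by
      rw [rankOne_star, rankOne_comp]
    calc ⟪θ (rankOne g Ω) g₁, θ (rankOne g' Ω) g₁'⟫_ℂ
        = ⟪g₁, ((θ (rankOne g Ω)).adjoint * θ (rankOne g' Ω)) g₁'⟫_ℂ := by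
          rw [ContinuousLinearMap.mul_apply, ContinuousLinearMap.adjoint_inner_right]
      _ = ⟪g₁, θ (⟪g, g'⟫_ℂ • rankOne Ω Ω) g₁'⟫_ℂ := by
          rw [← ContinuousLinearMap.star_eq_adjoint, ← map_star, ← map_mul, key]
      _ = ⟪g, g'⟫_ℂ * ⟪g₁, g₁'⟫_ℂ := by
          rw [map_smul, ContinuousLinearMap.smul_apply, inner_smul_right, h₁']
end

section
/- Let E be a Hilbert module over a unital C*-algebra B with unit vector ξ, and let θ : B^a(E) → B^a(E) be a unital *-homomorphism. Set p = θ(ξξ*) and E_1 = pE. Then for all x, x' ∈ E and y, y' ∈ E_1 one has ⟨θ(xξ*)y, θ(x'ξ*)y'⟩ = ⟨y, ⟨x, x'⟩ y'⟩. In particular, with the left B-action b · y = θ(ξbξ*)y on E_1, the map x ⊙ y ↦ θ(xξ*)y is a well-defined isometry from the internal tensor product E ⊙ E_1 into E. -/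
/-- Let `E` be a Hilbert module over a unital C*-algebra `B` with unit
vector `ξ` (Hilbert module and its algebra `A = B^a(E)` of adjointable operators
axiomatized as below) and let `θ : B^a(E) → B^a(E)` be a unital *-homomorphism.  Set
`p = θ(ξξ*)` and `E₁ = pE`.  Then for all `x, x' ∈ E` and `y, y' ∈ E₁`:
`⟨θ(xξ*)y, θ(x'ξ*)y'⟩ = ⟨y, ⟨x,x'⟩y'⟩`, where `b·y' = θ(ξbξ*)y'` is the left
`B`-action on `E₁`.  In particular `x ⊙ y ↦ θ(xξ*)y` is a well-defined isometry
from the internal tensor product `E ⊙ E₁` into `E`. -/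
theorem statement5
    {B : Type*} [NormedRing B] [StarRing B] [CStarRing B] [NormedAlgebra ℂ B]
    [CompleteSpace B] [StarModule ℂ B]
    {E : Type*} [AddCommGroup E] [Module ℂ E]
    {A : Type*} [NormedRing A] [StarRing A] [CStarRing A] [NormedAlgebra ℂ A]
    [CompleteSpace A] [StarModule ℂ A]
    (sm : E → B → E) (ip : E → E → B) (act : A → E → E) (rk : E → E → A)
    -- Hilbert module axioms
    (sm_mul : ∀ x b c, sm (sm x b) c = sm x (b * c))
    (sm_one : ∀ x, sm x 1 = x)
    (sm_smul : ∀ (z : ℂ) x b, sm x (z • b) = z • sm x b)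
    (sm_addB : ∀ x b c, sm x (b + c) = sm x b + sm x c)
    (ip_star : ∀ x y, star (ip x y) = ip y x)
    (ip_smB : ∀ x y b, ip x (sm y b) = ip x y * b)
    (ip_add : ∀ x y z, ip x (y + z) = ip x y + ip x z)
    -- axioms for the adjointable operators A = B^a(E)
    (act_one : ∀ x, act 1 x = x)
    (act_mul : ∀ a b x, act (a * b) x = act a (act b x))
    (act_add : ∀ a b x, act (a + b) x = act a x + act b x)
    (act_faithful : ∀ a b : A, (∀ x, act a x = act b x) → a = b)
    (ip_act : ∀ (a : A) x y, ip (act (star a) x) y = ip x (act a y))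
    -- axioms for rank-one operators
    (rk_apply : ∀ x y z, act (rk x y) z = sm x (ip y z))
    (rk_star : ∀ x y, star (rk x y) = rk y x)
    (rk_mul : ∀ x y x' y', rk x y * rk x' y' = rk (sm x (ip y x')) y')
    (rk_add_left : ∀ x x' y, rk (x + x') y = rk x y + rk x' y)
    (rk_smul_left : ∀ (z : ℂ) x y, rk (z • x) y = z • rk x y)
    (rk_sm_right : ∀ x y b, rk x (sm y b) = rk (sm x (star b)) y)
    -- the unit vector
    (ξ : E) (hξ : ip ξ ξ = 1)
    (θ : A →⋆ₐ[ℂ] A) :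
    ∀ x x' y y' : E,
      act (θ (rk ξ ξ)) y = y → act (θ (rk ξ ξ)) y' = y' →
      ip (act (θ (rk x ξ)) y) (act (θ (rk x' ξ)) y') =
        ip y (act (θ (rk (sm ξ (ip x x')) ξ)) y') := by
  intro x x' y y' _ _
  have h := ip_act (θ (rk ξ x)) y (act (θ (rk x' ξ)) y')
  rw [← map_star, rk_star] at h
  rw [h, ← act_mul, ← map_mul, rk_mul]
end

section
/- Let θ₁, θ₂ be unital *-endomorphisms of B(G) and v₁, v₂ isometries in B(G) with θ_i(a)v_i = v_i a for all a ∈ B(G). Then the map T on B(G ⊕ G) given in block form by T([[a₁₁,a₁₂],[a₂₁,a₂₂]]) = [[θ₁(a₁₁), v₁ a₁₂ v₂*],[v₂ a₂₁ v₁*, θ₂(a₂₂)]] is a unital, *-preserving, completely positive map. -/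
/-!
Write `q = 1 - v v*` for the projection onto the complement of the range of an isometry `v`
intertwining `θ`. Then `q` commutes with the range of `θ`, so `θ(a) = v a v* + q θ(a) q`, and
the block map splits as `T(m) = D* m D + P₁* θ₁(m) P₁ + P₂* θ₂(m) P₂` with `D = diag(v₁*, v₂*)`,
`P₁ = diag(q₁, 0)`, `P₂ = diag(0, q₂)`, and `θᵢ` applied entrywise. Since entrywise `θᵢ` is a
*-homomorphism of matrix algebras, `T(x* y) = ∑ₗ Φₗ(x)* Φₗ(y)` for three right-linear maps `Φₗ`,
so every sum `∑ᵢⱼ cᵢ* T(bᵢ* bⱼ) cⱼ` is a sum of three elements `r* r`, hence positive in the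
C*-algebra `M₂(B(G))`, hence itself of the form `r* r`.
-/

section Intertwiner

variable {A F : Type*} [Ring A] [StarRing A] [FunLike F A A] [StarHomClass F A A]
  {θ : F} {v : A}

theorem star_mul_map_eq_mul_star (hθ : ∀ a, θ a * v = v * a) (a : A) :
    star v * θ a = a * star v := by
  simpa [map_star] using congrArg star (hθ (star a))

theorem commute_one_sub_mul_star_map (hθ : ∀ a, θ a * v = v * a) (a : A) :
    Commute (1 - v * star v) (θ a) := by
  simp only [Commute, SemiconjBy, sub_mul, mul_sub, one_mul, mul_one, mul_assoc,
    star_mul_map_eq_mul_star hθ]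
  rw [← mul_assoc (θ a), hθ, mul_assoc]

theorem isStarProjection_one_sub_mul_star (hv : star v * v = 1) :
    IsStarProjection (1 - v * star v) :=
  IsStarProjection.one_sub
    ⟨by rw [IsIdempotentElem, mul_assoc, ← mul_assoc (star v), hv, one_mul],
      by simp [IsSelfAdjoint]⟩

theorem map_eq_conj_add_compression (hv : star v * v = 1) (hθ : ∀ a, θ a * v = v * a) (a : A) :
    θ a = v * a * star v + (1 - v * star v) * θ a * (1 - v * star v) := by
  have hq := (isStarProjection_one_sub_mul_star hv).isIdempotentElem
  rw [(commute_one_sub_mul_star_map hθ a).eq, mul_assoc (θ a), hq.eq, ← hθ]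
  noncomm_ring

end Intertwiner

section BlockMap

open Matrix

variable {A F : Type*} [Ring A] [StarRing A] [FunLike F A A]

def blockIntertwinerMap (θ₁ θ₂ : F) (v₁ v₂ : A) (m : Matrix (Fin 2) (Fin 2) A) :
    Matrix (Fin 2) (Fin 2) A :=
  !![θ₁ (m 0 0), v₁ * m 0 1 * star v₂; v₂ * m 1 0 * star v₁, θ₂ (m 1 1)]

theorem blockIntertwinerMap_one [OneHomClass F A A] (θ₁ θ₂ : F) (v₁ v₂ : A) :
    blockIntertwinerMap θ₁ θ₂ v₁ v₂ 1 = 1 := by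
  simp [blockIntertwinerMap, one_fin_two]

theorem blockIntertwinerMap_star [StarHomClass F A A] (θ₁ θ₂ : F) (v₁ v₂ : A)
    (m : Matrix (Fin 2) (Fin 2) A) :
    blockIntertwinerMap θ₁ θ₂ v₁ v₂ (star m) = star (blockIntertwinerMap θ₁ θ₂ v₁ v₂ m) := by
  ext i j
  fin_cases i <;> fin_cases j <;> simp [blockIntertwinerMap, star_apply, map_star, mul_assoc]

variable [StarHomClass F A A] {θ₁ θ₂ : F} {v₁ v₂ : A}

theorem blockIntertwinerMap_eq (hv₁ : star v₁ * v₁ = 1) (hv₂ : star v₂ * v₂ = 1)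
    (hθ₁ : ∀ a, θ₁ a * v₁ = v₁ * a) (hθ₂ : ∀ a, θ₂ a * v₂ = v₂ * a)
    (m : Matrix (Fin 2) (Fin 2) A) :
    blockIntertwinerMap θ₁ θ₂ v₁ v₂ m =
      star (diagonal ![star v₁, star v₂]) * m * diagonal ![star v₁, star v₂] +
      star (diagonal ![1 - v₁ * star v₁, 0]) * m.map θ₁ * diagonal ![1 - v₁ * star v₁, 0] +
      star (diagonal ![0, 1 - v₂ * star v₂]) * m.map θ₂ * diagonal ![0, 1 - v₂ * star v₂] := by
  ext i j
  fin_cases i <;> fin_cases j <;>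
    simp [blockIntertwinerMap, star_eq_conjTranspose, diagonal_conjTranspose, diagonal_mul]
  exacts [map_eq_conj_add_compression hv₁ hθ₁ _, map_eq_conj_add_compression hv₂ hθ₂ _]

theorem exists_blockIntertwinerMap_star_mul_eq_sum [NonUnitalRingHomClass F A A]
    (hv₁ : star v₁ * v₁ = 1) (hv₂ : star v₂ * v₂ = 1)
    (hθ₁ : ∀ a, θ₁ a * v₁ = v₁ * a) (hθ₂ : ∀ a, θ₂ a * v₂ = v₂ * a) :
    ∃ Φ : Fin 3 → Matrix (Fin 2) (Fin 2) A → Matrix (Fin 2) (Fin 2) A, ∀ x y,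
      blockIntertwinerMap θ₁ θ₂ v₁ v₂ (star x * y) = ∑ l, star (Φ l x) * Φ l y := by
  refine ⟨![fun x => x * diagonal ![star v₁, star v₂],
    fun x => x.map θ₁ * diagonal ![1 - v₁ * star v₁, 0],
    fun x => x.map θ₂ * diagonal ![0, 1 - v₂ * star v₂]], fun x y => ?_⟩
  have hmap : ∀ θ : F, (star x * y).map θ = star (x.map θ) * y.map θ := fun θ => by
    rw [Matrix.map_mul, star_eq_conjTranspose, star_eq_conjTranspose,
      conjTranspose_map _ (map_star θ)]
  simp only [blockIntertwinerMap_eq hv₁ hv₂ hθ₁ hθ₂, hmap, Fin.sum_univ_three, star_mul,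
    cons_val_zero, cons_val_one, cons_val_two, head_cons, tail_cons, mul_assoc]

end BlockMap

theorem sum_star_mul_apply_star_mul_mul_eq {R ι κ : Type*} [NonUnitalSemiring R] [StarRing R]
    [Fintype ι] [Fintype κ] {T : R → R} {Φ : κ → R → R}
    (hT : ∀ x y, T (star x * y) = ∑ l, star (Φ l x) * Φ l y) (b c : ι → R) :
    ∑ i, ∑ j, star (c i) * T (star (b i) * b j) * c j =
      ∑ l, star (∑ i, Φ l (b i) * c i) * ∑ i, Φ l (b i) * c i := by
  simp only [hT, star_sum, star_mul, Finset.sum_mul, Finset.mul_sum, mul_assoc]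
  rw [Finset.sum_comm]
  conv_rhs => rw [Finset.sum_comm]
  exact Finset.sum_congr rfl fun j _ => Finset.sum_comm

theorem Matrix.exists_sum_star_mul_self_eq_star_mul_self {A n ι : Type*} [CStarAlgebra A]
    [PartialOrder A] [StarOrderedRing A] [Fintype n] [DecidableEq n] [Fintype ι]
    (x : ι → Matrix n n A) : ∃ r, ∑ l, star (x l) * x l = star r * r := by
  -- Instance search fails to find these two instances on `CStarMatrix`, so they are given by hand.
  let _ : NonUnitalContinuousFunctionalCalculus ℝ (CStarMatrix n n A) IsSelfAdjoint :=
    IsSelfAdjoint.instNonUnitalContinuousFunctionalCalculus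
  have _ : NonnegSpectrumClass ℝ (CStarMatrix n n A) := CStarAlgebra.instNonnegSpectrumClass
  let e := CStarMatrix.ofMatrixStarAlgEquiv (n := n) (A := A)
  have hnonneg : 0 ≤ e (∑ l, star (x l) * x l) := by
    simpa only [map_sum, map_mul, map_star] using
      Finset.sum_nonneg fun l _ => star_mul_self_nonneg (e (x l))
  obtain ⟨b, hb⟩ := CStarAlgebra.nonneg_iff_eq_star_mul_self.mp hnonneg
  exact ⟨e.symm b, by rw [← e.symm_apply_apply (∑ l, _), hb, map_mul, map_star]⟩

open Matrix in
/-- Let `θ₁, θ₂` be unital *-endomorphisms of `B(G)` and `v₁, v₂`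
isometries in `B(G)` with `θᵢ(a)vᵢ = vᵢa` for all `a ∈ B(G)`.  Then the map `T` on
`B(G ⊕ G) ≅ M₂(B(G))` given in block form by
`T([[a₁₁,a₁₂],[a₂₁,a₂₂]]) = [[θ₁(a₁₁), v₁a₁₂v₂*],[v₂a₂₁v₁*, θ₂(a₂₂)]]` is a unital,
*-preserving, completely positive map (positivity in the C*-algebra `M₂(B(G))`
being expressed as being of the form `r*r`). -/
theorem statement15
    {G : Type*} [NormedAddCommGroup G] [InnerProductSpace ℂ G] [CompleteSpace G]
    (θ₁ θ₂ : (G →L[ℂ] G) →⋆ₐ[ℂ] (G →L[ℂ] G))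
    (v₁ v₂ : G →L[ℂ] G)
    (hv₁ : star v₁ * v₁ = 1) (hv₂ : star v₂ * v₂ = 1)
    (hint₁ : ∀ a : G →L[ℂ] G, θ₁ a * v₁ = v₁ * a)
    (hint₂ : ∀ a : G →L[ℂ] G, θ₂ a * v₂ = v₂ * a)
    (T : Matrix (Fin 2) (Fin 2) (G →L[ℂ] G) → Matrix (Fin 2) (Fin 2) (G →L[ℂ] G))
    (hT : ∀ m, T m = !![θ₁ (m 0 0), v₁ * m 0 1 * star v₂;
                       v₂ * m 1 0 * star v₁, θ₂ (m 1 1)]) :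
    T 1 = 1 ∧
    (∀ m, T (star m) = star (T m)) ∧
    ∀ (n : ℕ) (b c : Fin n → Matrix (Fin 2) (Fin 2) (G →L[ℂ] G)),
      ∃ r : Matrix (Fin 2) (Fin 2) (G →L[ℂ] G),
        ∑ i, ∑ j, star (c i) * T (star (b i) * b j) * c j = star r * r := by
  obtain rfl : T = blockIntertwinerMap θ₁ θ₂ v₁ v₂ := funext hT
  refine ⟨blockIntertwinerMap_one θ₁ θ₂ v₁ v₂, blockIntertwinerMap_star θ₁ θ₂ v₁ v₂,
    fun n b c => ?_⟩
  obtain ⟨Φ, hΦ⟩ := exists_blockIntertwinerMap_star_mul_eq_sum hv₁ hv₂ hint₁ hint₂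
  rw [sum_star_mul_apply_star_mul_mul_eq hΦ]
  exact Matrix.exists_sum_star_mul_self_eq_star_mul_self _
end
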